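/- Let X be a locally finite tree and fix a vertex x₀. For a discrete subgroup Γ ≤ Aut(X), define its stabilizer growth function by h_Γ(k) = max{ |Γ_v| : v a vertex with d(v,x₀) ≤ k } and, for a prime p, its p-stabilizer growth function by h_Γ^p(k) = max{ |Γ_v|_p : v a vertex with d(v,x₀) ≤ k }. If Γ and Γ' are lattices in Aut(X) that are commensurable in Aut(X), then h_Γ ≃ h_{Γ'}, and h_Γ^p ≃ h_{Γ'}^p for every prime p. -/

import Mathlib

open SimpleGraph MulAction
open scoped ENNReal

universe u

variable {V : Type u}

/-- The automorphism group of a simple graph, as a subgroup of the permutation group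
of its vertex set. -/
def SimpleGraph.autGroup (G : SimpleGraph V) : Subgroup (Equiv.Perm V) where
  carrier := {f | ∀ u v : V, G.Adj (f u) (f v) ↔ G.Adj u v}
  one_mem' := by intro u v; simp
  mul_mem' := by
    intro a b ha hb u v
    simp only [Set.mem_setOf_eq, Equiv.Perm.mul_apply] at *
    rw [ha, hb]
  inv_mem' := by
    intro a ha u v
    simpa using (ha (a⁻¹ u) (a⁻¹ v)).symm

/-- A subgroup of the permutation group of the vertices is discrete if all vertex
stabilizers are finite. -/
def IsDiscreteSubgroup (Γ : Subgroup (Equiv.Perm V)) : Prop :=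
  ∀ v : V, Finite (stabilizer Γ v)

/-- The `S`-covolume of a subgroup `Γ` of the permutation group of the vertices:
the sum of `1 / |Γ_v|` over the `Γ`-orbits meeting `S` (for `Γ`-invariant `S`, the
orbits contained in `S`), where `v` is a representative of the orbit. -/
noncomputable def covolume (Γ : Subgroup (Equiv.Perm V)) (S : Set V) : ℝ≥0∞ :=
  ∑' O : {O : Quotient (orbitRel Γ V) // Quotient.out O ∈ S},
    ((Nat.card (stabilizer Γ (Quotient.out (O : Quotient (orbitRel Γ V))))) : ℝ≥0∞)⁻¹

/-- A lattice: a discrete subgroup with finite covolume with respect to the set of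
all vertices. -/
def IsGraphLattice (Γ : Subgroup (Equiv.Perm V)) : Prop :=
  IsDiscreteSubgroup Γ ∧ covolume Γ Set.univ ≠ ⊤

/-- A nonuniform lattice: a lattice with infinitely many orbits of vertices. -/
def IsNonuniformLattice (Γ : Subgroup (Equiv.Perm V)) : Prop :=
  IsGraphLattice Γ ∧ Infinite (Quotient (orbitRel Γ V))

/-- `f ⪯ g` : there are `a, b` with `f k ≤ a * g (k + b)` for all `k`. -/
def GrowthLE (f g : ℕ → ℕ) : Prop :=
  ∃ a b : ℕ, ∀ k : ℕ, f k ≤ a * g (k + b)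

/-- Equivalence of growth types. -/
def GrowthEquiv (f g : ℕ → ℕ) : Prop :=
  GrowthLE f g ∧ GrowthLE g f

/-- The number of `Γ`-orbits of vertices meeting the ball of radius `k` about `x₀`. -/
noncomputable def quotientGrowth (G : SimpleGraph V) (Γ : Subgroup (Equiv.Perm V))
    (x₀ : V) (k : ℕ) : ℕ :=
  Nat.card {O : Quotient (orbitRel Γ V) //
    ∃ v : V, Quotient.mk (orbitRel Γ V) v = O ∧ G.dist v x₀ ≤ k}

/-- The maximal order of a `Γ`-stabilizer of a vertex in the ball of radius `k`
about `x₀`. -/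
noncomputable def stabilizerGrowth (G : SimpleGraph V) (Γ : Subgroup (Equiv.Perm V))
    (x₀ : V) (k : ℕ) : ℕ :=
  sSup {c : ℕ | ∃ v : V, G.dist v x₀ ≤ k ∧ c = Nat.card (stabilizer Γ v)}

/-- The `p`-order of a (finite) group order `k` : the largest power of `p` dividing `k`. -/
def pOrder (p k : ℕ) : ℕ := p ^ (k.factorization p)

/-- The maximal `p`-order of a `Γ`-stabilizer of a vertex in the ball of radius `k`
about `x₀`. -/
noncomputable def pStabilizerGrowth (G : SimpleGraph V) (Γ : Subgroup (Equiv.Perm V))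
    (p : ℕ) (x₀ : V) (k : ℕ) : ℕ :=
  sSup {c : ℕ | ∃ v : V, G.dist v x₀ ≤ k ∧ c = pOrder p (Nat.card (stabilizer Γ v))}

/-- `Γ` and `Γ'` are commensurable in (a subgroup) `A` of the permutation group:
some `A`-conjugate of `Γ` intersects `Γ'` in finite index in both. -/
def CommensurableIn {GG : Type u} [Group GG] (A Γ Γ' : Subgroup GG) : Prop :=
  ∃ g ∈ A, Subgroup.Commensurable (Subgroup.map (MulAut.conj g).toMonoidHom Γ) Γ'

/-- An `(m,n)`-biregular tree with parts `V₀`, `V₁`. -/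
structure IsBiregularTree (G : SimpleGraph V) (V₀ V₁ : Set V) (m n : ℕ) : Prop where
  connected : G.Connected
  acyclic : G.IsAcyclic
  disjoint : Disjoint V₀ V₁
  union : V₀ ∪ V₁ = Set.univ
  adj_parts : ∀ ⦃u v : V⦄, G.Adj u v → (u ∈ V₀ ∧ v ∈ V₁) ∨ (u ∈ V₁ ∧ v ∈ V₀)
  degree₀ : ∀ v ∈ V₀, (G.neighborSet v).Finite ∧ (G.neighborSet v).ncard = m
  degree₁ : ∀ v ∈ V₁, (G.neighborSet v).Finite ∧ (G.neighborSet v).ncard = n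

/-- A star tree of degree `m` with parts `V₀`, `V₁`. -/
structure IsStarTree (A : SimpleGraph V) (V₀ V₁ : Set V) (m : ℕ) : Prop where
  connected : A.Connected
  acyclic : A.IsAcyclic
  disjoint : Disjoint V₀ V₁
  union : V₀ ∪ V₁ = Set.univ
  adj_parts : ∀ ⦃u v : V⦄, A.Adj u v → (u ∈ V₀ ∧ v ∈ V₁) ∨ (u ∈ V₁ ∧ v ∈ V₀)
  degree₀ : ∀ v ∈ V₀, (A.neighborSet v).Finite ∧ (A.neighborSet v).ncard = m
  degree₁ : ∀ v ∈ V₁, (A.neighborSet v).Finite ∧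
    ((A.neighborSet v).ncard = 1 ∨ (A.neighborSet v).ncard = 2)

/-- The quotient graph `Γ\X`: vertices are `Γ`-orbits; two distinct orbits are
adjacent iff some vertex of one is adjacent to some vertex of the other. -/
def quotientGraph (G : SimpleGraph V) (Γ : Subgroup (Equiv.Perm V)) :
    SimpleGraph (Quotient (orbitRel Γ V)) where
  Adj O O' := O ≠ O' ∧ ∃ u v : V, Quotient.mk (orbitRel Γ V) u = O ∧
    Quotient.mk (orbitRel Γ V) v = O' ∧ G.Adj u v
  symm := ⟨by
    rintro O O' ⟨hne, u, v, hu, hv, huv⟩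
    exact ⟨hne.symm, v, u, hv, hu, huv.symm⟩⟩
  loopless := ⟨fun O h => h.1 rfl⟩

/-- An acceptable quotient growth function. -/
structure AcceptableGrowth (f : ℕ → ℕ) : Prop where
  base : f 0 = 1
  one_le : ∀ j : ℕ, 1 ≤ f (j + 1)
  le_two_mul : ∀ j : ℕ, f (j + 1) ≤ 2 * f j
  summable : Summable fun j : ℕ => (f j : ℝ) / 2 ^ j

/-- An `n`-admissible sequence `s`, indexed by `k ≥ 1`. -/
def NAdmissible (n : ℕ) (s : ℕ → ℕ) : Prop :=
  ∀ k : ℕ, 1 ≤ k → s k ∣ n ∧ 2 < s k ∧ s k ≤ n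

/-- The associated function `h j = (s 1 - 1) * ⋯ * (s j - 1)`, with `h 0 = 1`. -/
def admProd (s : ℕ → ℕ) (j : ℕ) : ℕ := ∏ i ∈ Finset.Icc 1 j, (s i - 1)

/-!
Conjugating `Γ` by `g ∈ Aut X` replaces `Γ_v` by `Γ_{g⁻¹ v}`, and `g` moves the ball of radius
`k` about `x₀` into the ball of radius `k + d(g x₀, x₀)`; so conjugation does not change either
growth type. For commensurable `A, B`, the group `A ⊓ B_v` is a subgroup of `A_v` of index at
most `[B : A ⊓ B]` in `B_v`, whence `|B_v| ≤ [B : A ⊓ B] · |A_v|`, and likewise for `p`-parts.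
-/

lemma GrowthLE.trans {f g h : ℕ → ℕ} (hfg : GrowthLE f g) (hgh : GrowthLE g h) :
    GrowthLE f h := by
  obtain ⟨a, b, hfg⟩ := hfg
  obtain ⟨a', b', hgh⟩ := hgh
  refine ⟨a * a', b + b', fun k => (hfg k).trans ?_⟩
  rw [mul_assoc, ← add_assoc]
  exact Nat.mul_le_mul_left a (hgh (k + b))

lemma GrowthEquiv.trans {f g h : ℕ → ℕ} (hfg : GrowthEquiv f g) (hgh : GrowthEquiv g h) :
    GrowthEquiv f h :=
  ⟨hfg.1.trans hgh.1, hgh.2.trans hfg.2⟩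

lemma pOrder_le_mul_of_dvd_mul {n i m : ℕ} (p : ℕ) (hn : n ∣ i * m) (hi : i ≠ 0)
    (hm : m ≠ 0) : pOrder p n ≤ i * pOrder p m :=
  calc pOrder p n ≤ pOrder p (i * m) :=
        Nat.le_of_dvd (Nat.ordProj_pos _ p) (Nat.ordProj_dvd_ordProj_of_dvd (by positivity) hn p)
    _ = pOrder p i * pOrder p m := Nat.ordProj_mul p hi hm
    _ ≤ i * pOrder p m := Nat.mul_le_mul_right _ (Nat.ordProj_le p hi)

namespace MulAction

variable {G α : Type*} [Group G] [MulAction G α]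

lemma card_stabilizer_eq_card_inf (H : Subgroup G) (a : α) :
    Nat.card (stabilizer H a) = Nat.card ↥(H ⊓ stabilizer G a) := by
  have h : stabilizer H a = (stabilizer G a ⊓ H).subgroupOf H := by
    rw [Subgroup.inf_subgroupOf_right]
    rfl
  rw [h, inf_comm]
  exact Nat.card_congr (Subgroup.subgroupOfEquivOfLe inf_le_left).toEquiv

lemma card_stabilizer_map_conj (Γ : Subgroup G) (g : G) (a : α) :
    Nat.card (stabilizer (Γ.map (MulAut.conj g).toMonoidHom) a) =
      Nat.card (stabilizer Γ (g⁻¹ • a)) := by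
  have hinj : Function.Injective (MulAut.conj g).toMonoidHom := (MulAut.conj g).injective
  have hstab : stabilizer G a = (stabilizer G (g⁻¹ • a)).map (MulAut.conj g).toMonoidHom := by
    rw [← stabilizer_smul_eq_stabilizer_map_conj, smul_inv_smul]
  rw [card_stabilizer_eq_card_inf, card_stabilizer_eq_card_inf, hstab,
    ← Subgroup.map_inf _ _ _ hinj, Subgroup.card_map_of_injective hinj]

/-- `|B_a| = |A ⊓ B_a| · [B_a : A ⊓ B_a]`, and `A ⊓ B_a` is a subgroup of `A_a`. -/
lemma card_stabilizer_dvd_relIndex_mul (A B : Subgroup G) (a : α) :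
    Nat.card (stabilizer B a) ∣
      A.relIndex (B ⊓ stabilizer G a) * Nat.card (stabilizer A a) := by
  set T := B ⊓ stabilizer G a
  have hT : Nat.card ↥(A ⊓ T) * A.relIndex T = Nat.card T := by
    rw [← Subgroup.inf_relIndex_right A T, ← Subgroup.relIndex_bot_left,
      ← Subgroup.relIndex_bot_left, Subgroup.relIndex_mul_relIndex _ _ _ bot_le inf_le_right]
  have hdvd : Nat.card ↥(A ⊓ T) ∣ Nat.card ↥(A ⊓ stabilizer G a) :=
    Subgroup.card_dvd_of_le (inf_le_inf_left A inf_le_right)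
  rw [card_stabilizer_eq_card_inf, card_stabilizer_eq_card_inf, ← hT, mul_comm]
  exact mul_dvd_mul_left _ hdvd

variable {A B : Subgroup G} {a : α}

lemma relIndex_inf_stabilizer_le (hAB : A.relIndex B ≠ 0) :
    A.relIndex (B ⊓ stabilizer G a) ≤ A.relIndex B :=
  Subgroup.relIndex_le_of_le_right inf_le_left hAB

lemma relIndex_inf_stabilizer_ne_zero (hAB : A.relIndex B ≠ 0) :
    A.relIndex (B ⊓ stabilizer G a) ≠ 0 :=
  mt (Subgroup.relIndex_eq_zero_of_le_right inf_le_left) hAB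

lemma card_stabilizer_le_relIndex_mul [Finite (stabilizer A a)] (hAB : A.relIndex B ≠ 0) :
    Nat.card (stabilizer B a) ≤ A.relIndex B * Nat.card (stabilizer A a) :=
  calc Nat.card (stabilizer B a)
      ≤ A.relIndex (B ⊓ stabilizer G a) * Nat.card (stabilizer A a) :=
        Nat.le_of_dvd (Nat.pos_of_ne_zero (mul_ne_zero (relIndex_inf_stabilizer_ne_zero hAB)
          Nat.card_pos.ne')) (card_stabilizer_dvd_relIndex_mul A B a)
    _ ≤ A.relIndex B * Nat.card (stabilizer A a) :=
        Nat.mul_le_mul_right _ (relIndex_inf_stabilizer_le hAB)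

lemma pOrder_card_stabilizer_le_relIndex_mul [Finite (stabilizer A a)] (p : ℕ)
    (hAB : A.relIndex B ≠ 0) :
    pOrder p (Nat.card (stabilizer B a)) ≤ A.relIndex B * pOrder p (Nat.card (stabilizer A a)) :=
  (pOrder_le_mul_of_dvd_mul p (card_stabilizer_dvd_relIndex_mul A B a)
      (relIndex_inf_stabilizer_ne_zero hAB) Nat.card_pos.ne').trans
    (Nat.mul_le_mul_right _ (relIndex_inf_stabilizer_le hAB))

end MulAction

lemma IsDiscreteSubgroup.map_conj {Γ : Subgroup (Equiv.Perm V)} (hΓ : IsDiscreteSubgroup Γ)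
    (g : Equiv.Perm V) : IsDiscreteSubgroup (Γ.map (MulAut.conj g).toMonoidHom) := fun v =>
  have := hΓ (g⁻¹ • v)
  Nat.finite_of_card_ne_zero (by rw [card_stabilizer_map_conj]; exact Nat.card_pos.ne')

namespace SimpleGraph

variable {G : SimpleGraph V}

lemma Hom.dist_map_le {W : Type*} {G' : SimpleGraph W} (f : G →g G') {u v : V}
    (h : G.Reachable u v) : G'.dist (f u) (f v) ≤ G.dist u v := by
  obtain ⟨p, hp⟩ := h.exists_walk_length_eq_dist
  exact (dist_le (p.map f)).trans ((p.length_map f).trans hp).le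

lemma dist_apply_le_dist_of_mem_autGroup (hconn : G.Connected) {g : Equiv.Perm V}
    (hg : g ∈ G.autGroup) (u v : V) : G.dist (g u) (g v) ≤ G.dist u v :=
  Hom.dist_map_le ⟨g, (hg _ _).mpr⟩ (hconn u v)

lemma dist_apply_le_of_mem_autGroup (hconn : G.Connected) {g : Equiv.Perm V}
    (hg : g ∈ G.autGroup) (v x₀ : V) : G.dist (g v) x₀ ≤ G.dist v x₀ + G.dist (g x₀) x₀ :=
  hconn.dist_triangle.trans
    (Nat.add_le_add_right (dist_apply_le_dist_of_mem_autGroup hconn hg v x₀) _)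

lemma finite_setOf_dist_le (hconn : G.Connected) (hlf : ∀ v : V, (G.neighborSet v).Finite)
    (x₀ : V) (k : ℕ) : {v : V | G.dist v x₀ ≤ k}.Finite := by
  induction k with
  | zero =>
    refine (Set.finite_singleton x₀).subset fun v hv => ?_
    exact hconn.dist_eq_zero_iff.mp (Nat.le_zero.mp hv)
  | succ k ih =>
    refine (ih.union (ih.biUnion fun u _ => hlf u)).subset fun v hv => ?_
    have hv : G.dist v x₀ ≤ k + 1 := hv
    rcases Nat.lt_or_ge k (G.dist v x₀) with hlt | hle
    · obtain ⟨p, hp⟩ := hconn.exists_walk_length_eq_dist v x₀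
      cases p with
      | nil => simp at hlt
      | @cons _ u _ hadj q =>
        have hu : G.dist u x₀ ≤ k := by
          have := dist_le q
          rw [Walk.length_cons] at hp
          omega
        exact Or.inr (Set.mem_biUnion hu hadj.symm)
    · exact Or.inl hle

end SimpleGraph

/-- `stabilizerGrowth` and `pStabilizerGrowth` are `ballSup` of `v ↦ |Γ_v|` and
`v ↦ |Γ_v|_p`. -/
noncomputable def ballSup (G : SimpleGraph V) (x₀ : V) (F : V → ℕ) (k : ℕ) : ℕ :=
  sSup {c : ℕ | ∃ v : V, G.dist v x₀ ≤ k ∧ c = F v}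

section Growth

variable {G : SimpleGraph V} (hconn : G.Connected) (hlf : ∀ v : V, (G.neighborSet v).Finite)
  (x₀ : V)
include hconn hlf

lemma growthLE_ballSup {F F' : V → ℕ} (c b : ℕ)
    (h : ∀ v : V, ∃ w : V, G.dist w x₀ ≤ G.dist v x₀ + b ∧ F v ≤ c * F' w) :
    GrowthLE (ballSup G x₀ F) (ballSup G x₀ F') := by
  refine ⟨c, b, fun k => csSup_le ⟨F x₀, x₀, by simp, rfl⟩ ?_⟩
  rintro _ ⟨v, hv, rfl⟩
  obtain ⟨w, hw, hle⟩ := h v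
  have hbdd : BddAbove {n : ℕ | ∃ v : V, G.dist v x₀ ≤ k + b ∧ n = F' v} :=
    ((G.finite_setOf_dist_le hconn hlf x₀ (k + b)).image F').subset
      (by rintro _ ⟨v, hv, rfl⟩; exact ⟨v, hv, rfl⟩) |>.bddAbove
  exact hle.trans (Nat.mul_le_mul_left c (le_csSup hbdd ⟨w, by omega, rfl⟩))

lemma growthLE_ballSup_of_le_mul {F F' : V → ℕ} (c : ℕ) (h : ∀ v : V, F v ≤ c * F' v) :
    GrowthLE (ballSup G x₀ F) (ballSup G x₀ F') :=
  growthLE_ballSup hconn hlf x₀ c 0 fun v => ⟨v, le_rfl, h v⟩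

lemma growthEquiv_ballSup_map_conj {g : Equiv.Perm V} (hg : g ∈ G.autGroup)
    (Γ : Subgroup (Equiv.Perm V)) (φ : ℕ → ℕ) :
    GrowthEquiv (ballSup G x₀ fun v => φ (Nat.card (stabilizer Γ v)))
      (ballSup G x₀ fun v => φ (Nat.card (stabilizer (Γ.map (MulAut.conj g).toMonoidHom) v))) :=
  ⟨growthLE_ballSup hconn hlf x₀ 1 (G.dist (g x₀) x₀) fun v =>
      ⟨g v, G.dist_apply_le_of_mem_autGroup hconn hg v x₀, by
        rw [card_stabilizer_map_conj, ← Equiv.Perm.smul_def, inv_smul_smul, one_mul]⟩,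
    growthLE_ballSup hconn hlf x₀ 1 (G.dist (g⁻¹ x₀) x₀) fun v =>
      ⟨g⁻¹ v, G.dist_apply_le_of_mem_autGroup hconn (G.autGroup.inv_mem hg) v x₀, by
        rw [card_stabilizer_map_conj, Equiv.Perm.smul_def, one_mul]⟩⟩

variable {A B : Subgroup (Equiv.Perm V)} (hA : IsDiscreteSubgroup A) (hB : IsDiscreteSubgroup B)
  (hAB : A.Commensurable B)
include hA hB hAB

lemma growthEquiv_stabilizerGrowth_of_commensurable :
    GrowthEquiv (stabilizerGrowth G A x₀) (stabilizerGrowth G B x₀) :=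
  ⟨growthLE_ballSup_of_le_mul hconn hlf x₀ _ fun v =>
      have := hB v; card_stabilizer_le_relIndex_mul hAB.2,
    growthLE_ballSup_of_le_mul hconn hlf x₀ _ fun v =>
      have := hA v; card_stabilizer_le_relIndex_mul hAB.1⟩

lemma growthEquiv_pStabilizerGrowth_of_commensurable (p : ℕ) :
    GrowthEquiv (pStabilizerGrowth G A p x₀) (pStabilizerGrowth G B p x₀) :=
  ⟨growthLE_ballSup_of_le_mul hconn hlf x₀ _ fun v =>
      have := hB v; pOrder_card_stabilizer_le_relIndex_mul p hAB.2,
    growthLE_ballSup_of_le_mul hconn hlf x₀ _ fun v =>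
      have := hA v; pOrder_card_stabilizer_le_relIndex_mul p hAB.1⟩

end Growth

theorem statement10_general {V : Type u} (G : SimpleGraph V)
    (hconn : G.Connected)
    (hlf : ∀ v : V, (G.neighborSet v).Finite) (x₀ : V)
    (Γ Γ' : Subgroup (Equiv.Perm V))
    (hlat : IsGraphLattice Γ) (hlat' : IsGraphLattice Γ')
    (hcomm : CommensurableIn G.autGroup Γ Γ') :
    GrowthEquiv (fun k => stabilizerGrowth G Γ x₀ k)
      (fun k => stabilizerGrowth G Γ' x₀ k) ∧
    ∀ p : ℕ, p.Prime →
      GrowthEquiv (fun k => pStabilizerGrowth G Γ p x₀ k)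
        (fun k => pStabilizerGrowth G Γ' p x₀ k) := by
  obtain ⟨g, hg, hconjΓΓ'⟩ := hcomm
  have hconj := hlat.1.map_conj g
  exact ⟨(growthEquiv_ballSup_map_conj hconn hlf x₀ hg Γ id).trans
      (growthEquiv_stabilizerGrowth_of_commensurable hconn hlf x₀ hconj hlat'.1 hconjΓΓ'),
    fun p _ => (growthEquiv_ballSup_map_conj hconn hlf x₀ hg Γ (pOrder p)).trans
      (growthEquiv_pStabilizerGrowth_of_commensurable hconn hlf x₀ hconj hlat'.1 hconjΓΓ' p)⟩

/-- If `X` is a locally finite tree and `Γ, Γ'` are commensurable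
lattices in `Aut X`, then their stabilizer growth functions are equivalent, and
for every prime `p` their `p`-stabilizer growth functions are equivalent. -/
theorem statement10 {V : Type u} (G : SimpleGraph V)
    (hconn : G.Connected) (hacyc : G.IsAcyclic)
    (hlf : ∀ v : V, (G.neighborSet v).Finite) (x₀ : V)
    (Γ Γ' : Subgroup (Equiv.Perm V))
    (hΓ : Γ ≤ G.autGroup) (hΓ' : Γ' ≤ G.autGroup)
    (hlat : IsGraphLattice Γ) (hlat' : IsGraphLattice Γ')
    (hcomm : CommensurableIn G.autGroup Γ Γ') :
    GrowthEquiv (fun k => stabilizerGrowth G Γ x₀ k)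
      (fun k => stabilizerGrowth G Γ' x₀ k) ∧
    ∀ p : ℕ, p.Prime →
      GrowthEquiv (fun k => pStabilizerGrowth G Γ p x₀ k)
        (fun k => pStabilizerGrowth G Γ' p x₀ k) :=
  statement10_general G hconn hlf x₀ Γ Γ' hlat hlat' hcomm
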